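/- Let x be a 3-strand braid with inf(x) = p and canonical length ℓ(x) = r. If x = Δ^p x_1⋯x_r where each x_i is a positive simple element of B_3 with x_i ≠ 1 and x_i ≠ Δ, then this expression is the left normal form of x; that is, every consecutive pair (x_i, x_{i+1}) is left-weighted. -/

import Mathlib

/-!
Garside-theoretic definitions for the Artin braid group `B n`,
presented with generators `σ_1, …, σ_{n-1}` (indexed by `Fin (n-1)`).
-/

namespace Braid

/-- The braid relations on `m` generators: `σᵢσⱼ = σⱼσᵢ` for `|i - j| ≥ 2` and
`σᵢσⱼσᵢ = σⱼσᵢσⱼ` for `j = i + 1`. -/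
def braidRels (m : ℕ) : Set (FreeGroup (Fin m)) :=
  {r | ∃ i j : Fin m, ((i : ℕ) + 2 ≤ (j : ℕ) ∨ (j : ℕ) + 2 ≤ (i : ℕ)) ∧
      r = FreeGroup.of i * FreeGroup.of j * (FreeGroup.of j * FreeGroup.of i)⁻¹} ∪
  {r | ∃ i j : Fin m, (j : ℕ) = (i : ℕ) + 1 ∧
      r = FreeGroup.of i * FreeGroup.of j * FreeGroup.of i *
          (FreeGroup.of j * FreeGroup.of i * FreeGroup.of j)⁻¹}

/-- The braid group on `n` strands. -/
abbrev B (n : ℕ) : Type := PresentedGroup (braidRels (n - 1))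

/-- The Artin generator `σ_{i+1}` (0-indexed) of `B n`. -/
def gen (n : ℕ) (i : Fin (n - 1)) : B n := PresentedGroup.of i

/-- The Artin generator, as a function of a natural number index (junk value `1`
out of range). -/
def gen' (n : ℕ) (i : ℕ) : B n := if h : i < n - 1 then gen n ⟨i, h⟩ else 1

/-- The submonoid of positive braids `B_n⁺`. -/
def posMon (n : ℕ) : Submonoid (B n) := Submonoid.closure (Set.range (gen n))

/-- The prefix order: `a ≼ b` iff `a⁻¹ * b` is a positive braid. -/
def Pref (n : ℕ) (a b : B n) : Prop := a⁻¹ * b ∈ posMon n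

/-- The Garside half-twist `Δ = (σ_1 ⋯ σ_{n-1})(σ_1 ⋯ σ_{n-2}) ⋯ (σ_1 σ_2) σ_1`. -/
def Δb (n : ℕ) : B n :=
  (((List.range (n - 1)).reverse).map
    (fun k => ((List.range (k + 1)).map (gen' n)).prod)).prod

/-- The power `τ^k` of the inner automorphism `τ(x) = Δ⁻¹ x Δ`. -/
def τpow (n : ℕ) (k : ℤ) (x : B n) : B n := (Δb n) ^ (-k) * x * (Δb n) ^ k

/-- A braid is simple if `1 ≼ s ≼ Δ`. -/
def IsSimple (n : ℕ) (s : B n) : Prop := Pref n 1 s ∧ Pref n s (Δb n)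

/-- The right complement `∂(s) = s⁻¹ Δ` of a simple element. -/
def dcompl (n : ℕ) (s : B n) : B n := s⁻¹ * Δb n

/-- A pair `(a, b)` is left-weighted if `b ∧ ∂(a) = 1`, i.e. the only common
positive prefix of `b` and `∂(a)` is trivial. -/
def LeftWeighted (n : ℕ) (a b : B n) : Prop :=
  ∀ t : B n, Pref n 1 t → Pref n t b → Pref n t (dcompl n a) → t = 1

/-- `IsLNF n x p L` : the expression `Δ^p * L.prod` is the left normal form of `x`,
i.e. each factor is simple, nontrivial, different from `Δ`, and each pair of
consecutive factors is left-weighted. -/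
def IsLNF (n : ℕ) (x : B n) (p : ℤ) (L : List (B n)) : Prop :=
  x = (Δb n) ^ p * L.prod ∧
  (∀ s ∈ L, IsSimple n s ∧ s ≠ 1 ∧ s ≠ Δb n) ∧
  (∀ i : ℕ, i + 1 < L.length →
    LeftWeighted n (L.getD i 1) (L.getD (i + 1) 1))

/-- The canonical length `ℓ(x)`: the number of non-`Δ` factors in the left normal
form of `x`. -/
noncomputable def canLen (n : ℕ) (x : B n) : ℕ :=
  sInf {r : ℕ | ∃ p L, List.length L = r ∧ IsLNF n x p L}

/-- The infimum `inf(x)`: the power of `Δ` in the left normal form of `x`. -/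
noncomputable def infB (n : ℕ) (x : B n) : ℤ :=
  sSup {p : ℤ | ∃ L, IsLNF n x p L}

/-- The summit canonical length `ℓ_s(x)`: the minimal canonical length in the
conjugacy class of `x`. -/
noncomputable def summitLen (n : ℕ) (x : B n) : ℕ :=
  sInf {r : ℕ | ∃ z, IsConj x z ∧ canLen n z = r}

/-- The super summit set `SSS(x)`: conjugates of `x` of minimal canonical length. -/
def SSS (n : ℕ) (x : B n) : Set (B n) :=
  {y | IsConj x y ∧ canLen n y = summitLen n x}

/-- A braid `x = Δ^p x_1 ⋯ x_r` (in left normal form, `r ≥ 1`) is rigid if the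
pair `(x_r, τ^{-p}(x_1))` is left-weighted. -/
def Rigid (n : ℕ) (x : B n) : Prop :=
  ∃ p L, IsLNF n x p L ∧ L ≠ [] ∧
    LeftWeighted n (L.getLastD 1) (τpow n (-p) (L.headD 1))

/-- Cycling: for `x = Δ^p x_1 ⋯ x_r` in left normal form with `r ≥ 1`,
`c(x) = τ^{-p}(x_1)⁻¹ * x * τ^{-p}(x_1)` (and `c(x) = x` if `ℓ(x) = 0`). -/
noncomputable def cyc (n : ℕ) (x : B n) : B n :=
  open Classical in
  if h : ∃ pL : ℤ × List (B n), IsLNF n x pL.1 pL.2 ∧ pL.2 ≠ [] then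
    (τpow n (-(Classical.choose h).1) ((Classical.choose h).2.headD 1))⁻¹ * x *
      τpow n (-(Classical.choose h).1) ((Classical.choose h).2.headD 1)
  else x


def s0 : B 3 := gen 3 0
def s1 : B 3 := gen 3 1
lemma delta_eq : Δb 3 = s0 * s1 * s0 := by
  simp [Δb, List.range_succ, gen', s0, s1]
lemma braid_rel : s0 * s1 * s0 = s1 * s0 * s1 := by
  have h : (FreeGroup.of (0:Fin 2) * FreeGroup.of (1:Fin 2) * FreeGroup.of 0 *
      (FreeGroup.of 1 * FreeGroup.of 0 * FreeGroup.of 1)⁻¹) ∈ braidRels 2 := by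
    right
    exact ⟨0, 1, by decide, rfl⟩
  have h2 : PresentedGroup.mk (braidRels 2)
      (FreeGroup.of (0:Fin 2) * FreeGroup.of 1 * FreeGroup.of 0 *
      (FreeGroup.of 1 * FreeGroup.of 0 * FreeGroup.of 1)⁻¹) = 1 :=
    (QuotientGroup.eq_one_iff _).mpr (Subgroup.subset_normalClosure h)
  have h3 : s0 * s1 * s0 * (s1 * s0 * s1)⁻¹ = 1 := by
    simpa [s0, s1, gen, PresentedGroup.of, map_mul, map_inv] using h2
  exact mul_inv_eq_one.mp h3
lemma rels_check {G : Type*} [Group G] (f : Fin 2 → G)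
    (hbr : f 0 * f 1 * f 0 = f 1 * f 0 * f 1) :
    ∀ r ∈ braidRels 2, FreeGroup.lift f r = 1 := by
  rintro r (⟨i, j, hij, rfl⟩ | ⟨i, j, hij, rfl⟩)
  · omega
  · have hi : i = 0 := by omega
    have hj : j = 1 := by omega
    subst hi; subst hj
    rw [show FreeGroup.lift f _ = f 0 * f 1 * f 0 * (f 1 * f 0 * f 1)⁻¹ by simp [mul_assoc], hbr, mul_inv_cancel]
noncomputable def expHom : B 3 →* Multiplicative ℤ :=
  PresentedGroup.toGroup (f := fun _ => Multiplicative.ofAdd (1:ℤ)) (rels_check _ rfl)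
noncomputable def E (x : B 3) : ℤ := Multiplicative.toAdd (expHom x)
@[simp] lemma E_one : E 1 = 0 := by simp [E]
@[simp] lemma E_mul (x y : B 3) : E (x*y) = E x + E y := by simp [E]
@[simp] lemma E_inv (x : B 3) : E x⁻¹ = - E x := by simp [E]
@[simp] lemma E_s0 : E s0 = 1 := by simp [E, s0, gen, expHom]
@[simp] lemma E_s1 : E s1 = 1 := by simp [E, s1, gen, expHom]
noncomputable def permHom : B 3 →* Equiv.Perm (Fin 3) :=
  PresentedGroup.toGroup
    (f := fun i => if i = 0 then Equiv.swap 0 1 else Equiv.swap 1 2)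
    (rels_check _ (by decide))
@[simp] lemma P_s0 : permHom s0 = Equiv.swap 0 1 := by simp [s0, gen, permHom]
@[simp] lemma P_s1 : permHom s1 = Equiv.swap 1 2 := by simp [s1, gen, permHom]
lemma perm_ne {u v : B 3} (h : permHom u ≠ permHom v) : u ≠ v :=
  fun e => h (congrArg _ e)
lemma s0_ne_s1 : s0 ≠ s1 := perm_ne (by simp; decide)
lemma s0s1_ne_s1s0 : s0 * s1 ≠ s1 * s0 := perm_ne (by simp; decide)

-- positivity
lemma s0_pos : s0 ∈ posMon 3 := Submonoid.subset_closure ⟨0, rfl⟩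
lemma s1_pos : s1 ∈ posMon 3 := Submonoid.subset_closure ⟨1, rfl⟩

lemma pos_list {x : B 3} (hx : x ∈ posMon 3) :
    ∃ M : List (B 3), (∀ s ∈ M, s = s0 ∨ s = s1) ∧ x = M.prod := by
  induction hx using Submonoid.closure_induction with
  | mem x hx =>
    obtain ⟨i, rfl⟩ := hx
    fin_cases i
    · exact ⟨[s0], by simp, by simp [s0]⟩
    · exact ⟨[s1], by simp, by simp [s1]⟩
  | one => exact ⟨[], by simp, by simp⟩
  | mul x y _ _ ihx ihy =>
    obtain ⟨M, hM, rfl⟩ := ihx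
    obtain ⟨N, hN, rfl⟩ := ihy
    refine ⟨M ++ N, ?_, by simp⟩
    intro s hs
    rcases List.mem_append.mp hs with h | h
    · exact hM s h
    · exact hN s h

lemma E_list (M : List (B 3)) (hM : ∀ s ∈ M, s = s0 ∨ s = s1) :
    E M.prod = M.length := by
  induction M with
  | nil => simp
  | cons a M ih =>
    have ha := hM a (by simp)
    have hE : E a = 1 := by rcases ha with rfl | rfl <;> simp
    simp [hE, ih (fun s hs => hM s (by simp [hs]))]
    ring

lemma pos_E_nonneg {x : B 3} (hx : x ∈ posMon 3) : 0 ≤ E x := by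
  obtain ⟨M, hM, rfl⟩ := pos_list hx
  rw [E_list M hM]; positivity

lemma pos_E_zero {x : B 3} (hx : x ∈ posMon 3) (h : E x = 0) : x = 1 := by
  obtain ⟨M, hM, rfl⟩ := pos_list hx
  rw [E_list M hM] at h
  have : M = [] := List.length_eq_zero_iff.mp (by exact_mod_cast h)
  simp [this]

lemma pos_E_one {x : B 3} (hx : x ∈ posMon 3) (h : E x = 1) : x = s0 ∨ x = s1 := by
  obtain ⟨M, hM, rfl⟩ := pos_list hx
  rw [E_list M hM] at h
  have : M.length = 1 := by exact_mod_cast h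
  obtain ⟨a, rfl⟩ := List.length_eq_one_iff.mp this
  simpa using hM a (by simp)

lemma pos_E_two {x : B 3} (hx : x ∈ posMon 3) (h : E x = 2) :
    x = s0*s0 ∨ x = s0*s1 ∨ x = s1*s0 ∨ x = s1*s1 := by
  obtain ⟨M, hM, rfl⟩ := pos_list hx
  rw [E_list M hM] at h
  have hl : M.length = 2 := by exact_mod_cast h
  match M, hl with
  | [a, b], _ =>
    have ha := hM a (by simp)
    have hb := hM b (by simp)
    rcases ha with rfl | rfl <;> rcases hb with rfl | rfl <;> simp

lemma pref_one_iff {t : B 3} : Pref 3 1 t ↔ t ∈ posMon 3 := by simp [Pref]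

lemma pref_trans {a b c : B 3} (h1 : Pref 3 a b) (h2 : Pref 3 b c) : Pref 3 a c := by
  have := mul_mem h1 h2
  simpa [Pref, mul_assoc] using this

lemma pref_E_le {a b : B 3} (h : Pref 3 a b) : E a ≤ E b := by
  have := pos_E_nonneg h
  simp at this
  linarith

lemma pref_eq {a b : B 3} (h : Pref 3 a b) (hE : E b ≤ E a) : a = b := by
  have h0 : E (a⁻¹ * b) = 0 := by simp; linarith [pref_E_le h]
  have := pos_E_zero h h0
  have : b = a * 1 := by rw [← this]; group
  simp [this]

lemma pref_s0_s0 : Pref 3 s0 s0 := by simp [Pref]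
lemma pref_s1_s1 : Pref 3 s1 s1 := by simp [Pref]
lemma pref_s0_s0s1 : Pref 3 s0 (s0*s1) := by
  have : s0⁻¹ * (s0 * s1) = s1 := by group
  simp [Pref, this, s1_pos]
lemma pref_s1_s1s0 : Pref 3 s1 (s1*s0) := by
  have : s1⁻¹ * (s1 * s0) = s0 := by group
  simp [Pref, this, s0_pos]

lemma npref_s0_s1 : ¬ Pref 3 s0 s1 := fun h => s0_ne_s1 (pref_eq h (by simp))
lemma npref_s1_s0 : ¬ Pref 3 s1 s0 := fun h => s0_ne_s1 (pref_eq h (by simp)).symm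

lemma npref_s0_s1s0 : ¬ Pref 3 s0 (s1*s0) := by
  intro h
  have hE : E (s0⁻¹ * (s1*s0)) = 1 := by simp
  rcases pos_E_one h hE with h' | h'
  · have h2 : s1 * s0 = s0 * s0 := by
      rw [← mul_inv_cancel_left s0 (s1*s0), h']
    exact perm_ne (u := s1*s0) (v := s0*s0) (by simp; decide) h2
  · have h2 : s1 * s0 = s0 * s1 := by
      rw [← mul_inv_cancel_left s0 (s1*s0), h']
    exact s0s1_ne_s1s0 h2.symm

lemma npref_s1_s0s1 : ¬ Pref 3 s1 (s0*s1) := by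
  intro h
  have hE : E (s1⁻¹ * (s0*s1)) = 1 := by simp
  rcases pos_E_one h hE with h' | h'
  · have h2 : s0 * s1 = s1 * s0 := by
      rw [← mul_inv_cancel_left s1 (s0*s1), h']
    exact s0s1_ne_s1s0 h2
  · have h2 : s0 * s1 = s1 * s1 := by
      rw [← mul_inv_cancel_left s1 (s0*s1), h']
    exact perm_ne (u := s0*s1) (v := s1*s1) (by simp; decide) h2

def Good (s : B 3) : Prop := s = s0 ∨ s = s1 ∨ s = s0*s1 ∨ s = s1*s0

@[simp] lemma E_delta : E (Δb 3) = 3 := by rw [delta_eq]; simp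

lemma d_s0 : dcompl 3 s0 = s1 * s0 := by rw [dcompl, delta_eq]; group
lemma d_s1 : dcompl 3 s1 = s0 * s1 := by
  rw [dcompl, delta_eq, braid_rel]; group
lemma d_s0s1 : dcompl 3 (s0*s1) = s0 := by rw [dcompl, delta_eq]; group
lemma d_s1s0 : dcompl 3 (s1*s0) = s1 := by
  rw [dcompl, delta_eq, braid_rel]; group

lemma good_E {s : B 3} (h : Good s) : E s = 1 ∨ E s = 2 := by
  rcases h with rfl | rfl | rfl | rfl <;> simp

lemma good_pos {s : B 3} (h : Good s) : s ∈ posMon 3 := by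
  rcases h with rfl | rfl | rfl | rfl
  exacts [s0_pos, s1_pos, mul_mem s0_pos s1_pos, mul_mem s1_pos s0_pos]

lemma good_pref_delta {s : B 3} (h : Good s) : Pref 3 s (Δb 3) := by
  have h0 : Pref 3 s (Δb 3) ↔ dcompl 3 s ∈ posMon 3 := Iff.rfl
  rcases h with rfl | rfl | rfl | rfl
  · rw [h0, d_s0]; exact mul_mem s1_pos s0_pos
  · rw [h0, d_s1]; exact mul_mem s0_pos s1_pos
  · rw [h0, d_s0s1]; exact s0_pos
  · rw [h0, d_s1s0]; exact s1_pos

lemma good_props {s : B 3} (h : Good s) : IsSimple 3 s ∧ s ≠ 1 ∧ s ≠ Δb 3 := by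
  refine ⟨⟨pref_one_iff.mpr (good_pos h), good_pref_delta h⟩, ?_, ?_⟩
  · intro e
    rcases good_E h with h1 | h1 <;> rw [e] at h1 <;> simp at h1
  · intro e
    rcases good_E h with h1 | h1 <;> rw [e] at h1 <;> simp at h1

lemma delta_ne_vals :
    Δb 3 ≠ s0*s0*s0 ∧ Δb 3 ≠ s0*s0*s1 ∧ Δb 3 ≠ s1*s1*s0 ∧ Δb 3 ≠ s1*s1*s1 := by
  rw [delta_eq]
  refine ⟨perm_ne ?_, perm_ne ?_, perm_ne ?_, perm_ne ?_⟩ <;> simp <;> decide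

lemma good_of_props {s : B 3} (h : IsSimple 3 s) (h1 : s ≠ 1) (h2 : s ≠ Δb 3) :
    Good s := by
  obtain ⟨hp, hd⟩ := h
  rw [pref_one_iff] at hp
  have hd' : dcompl 3 s ∈ posMon 3 := hd
  have e1 : 0 ≤ E s := pos_E_nonneg hp
  have e2 : E s ≤ 3 := by
    have := pos_E_nonneg hd'
    simp [dcompl] at this
    linarith
  interval_cases h3 : (E s)
  · exact absurd (pos_E_zero hp h3) h1
  · rcases pos_E_one hp h3 with rfl | rfl
    · exact Or.inl rfl
    · exact Or.inr (Or.inl rfl)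
  · rcases pos_E_two hp h3 with rfl | rfl | rfl | rfl
    · exfalso
      have hE : E (dcompl 3 (s0*s0)) = 1 := by simp [dcompl]
      rcases pos_E_one hd' hE with h' | h'
      · have : Δb 3 = s0*s0*s0 := by
          rw [← mul_inv_cancel_left (s0*s0) (Δb 3)]
          show (s0*s0) * dcompl 3 (s0*s0) = _
          rw [h']
        exact delta_ne_vals.1 this
      · have : Δb 3 = s0*s0*s1 := by
          rw [← mul_inv_cancel_left (s0*s0) (Δb 3)]
          show (s0*s0) * dcompl 3 (s0*s0) = _
          rw [h']
        exact delta_ne_vals.2.1 this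
    · exact Or.inr (Or.inr (Or.inl rfl))
    · exact Or.inr (Or.inr (Or.inr rfl))
    · exfalso
      have hE : E (dcompl 3 (s1*s1)) = 1 := by simp [dcompl]
      rcases pos_E_one hd' hE with h' | h'
      · have : Δb 3 = s1*s1*s0 := by
          rw [← mul_inv_cancel_left (s1*s1) (Δb 3)]
          show (s1*s1) * dcompl 3 (s1*s1) = _
          rw [h']
        exact delta_ne_vals.2.2.1 this
      · have : Δb 3 = s1*s1*s1 := by
          rw [← mul_inv_cancel_left (s1*s1) (Δb 3)]
          show (s1*s1) * dcompl 3 (s1*s1) = _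
          rw [h']
        exact delta_ne_vals.2.2.2 this
  · exfalso
    have hE : E (dcompl 3 s) = 0 := by simp [dcompl, h3]
    have h5 := pos_E_zero hd' hE
    have h4 : s⁻¹ * Δb 3 = 1 := h5
    apply h2
    rw [← mul_inv_cancel_left s (Δb 3), h4, mul_one]

lemma g_s0 : Good s0 := Or.inl rfl
lemma g_s1 : Good s1 := Or.inr (Or.inl rfl)
lemma g_s0s1 : Good (s0*s1) := Or.inr (Or.inr (Or.inl rfl))
lemma g_s1s0 : Good (s1*s0) := Or.inr (Or.inr (Or.inr rfl))

lemma list_pos {M : List (B 3)} (hM : ∀ s ∈ M, s = s0 ∨ s = s1) :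
    M.prod ∈ posMon 3 := by
  induction M with
  | nil => exact Submonoid.one_mem _
  | cons u M' ih =>
    rw [List.prod_cons]
    refine mul_mem ?_ (ih fun s hs => hM s (by simp [hs]))
    rcases hM u (by simp) with rfl | rfl
    exacts [s0_pos, s1_pos]

lemma lw_criterion {a b : B 3}
    (h0 : ¬ (Pref 3 s0 b ∧ Pref 3 s0 (dcompl 3 a)))
    (h1 : ¬ (Pref 3 s1 b ∧ Pref 3 s1 (dcompl 3 a))) :
    LeftWeighted 3 a b := by
  intro t ht htb htd
  rw [pref_one_iff] at ht
  obtain ⟨M, hM, rfl⟩ := pos_list ht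
  match M, hM with
  | [], _ => simp
  | u :: M', hM =>
    exfalso
    have hpref : Pref 3 u (u :: M').prod := by
      have h2 : u⁻¹ * (u :: M').prod = M'.prod := by rw [List.prod_cons]; group
      show _ ∈ _
      rw [h2]
      exact list_pos (fun s hs => hM s (by simp [hs]))
    have hub := pref_trans hpref htb
    have hud := pref_trans hpref htd
    rcases hM u (by simp) with rfl | rfl
    · exact h0 ⟨hub, hud⟩
    · exact h1 ⟨hub, hud⟩

lemma bad_rewrite {a b : B 3} (ha : Good a) (hb : Good b)
    (hn : ¬ LeftWeighted 3 a b) :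
    (∃ c, Good c ∧ a * b = c) ∨ (a * b = Δb 3) ∨
      (∃ c, Good c ∧ a * b = Δb 3 * c) := by
  rcases ha with rfl | rfl | rfl | rfl <;> rcases hb with rfl | rfl | rfl | rfl
  · exact absurd (lw_criterion (by rw [d_s0]; exact fun h => npref_s0_s1s0 h.2)
      (fun h => npref_s1_s0 h.1)) hn
  · exact Or.inl ⟨s0*s1, g_s0s1, rfl⟩
  · exact absurd (lw_criterion (by rw [d_s0]; exact fun h => npref_s0_s1s0 h.2)
      (fun h => npref_s1_s0s1 h.1)) hn
  · refine Or.inr (Or.inl ?_); rw [delta_eq]; group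
  · exact Or.inl ⟨s1*s0, g_s1s0, rfl⟩
  · exact absurd (lw_criterion (fun h => npref_s0_s1 h.1)
      (by rw [d_s1]; exact fun h => npref_s1_s0s1 h.2)) hn
  · refine Or.inr (Or.inl ?_); rw [delta_eq, braid_rel]; group
  · exact absurd (lw_criterion (fun h => npref_s0_s1s0 h.1)
      (by rw [d_s1]; exact fun h => npref_s1_s0s1 h.2)) hn
  · refine Or.inr (Or.inl ?_); rw [delta_eq]
  · exact absurd (lw_criterion (fun h => npref_s0_s1 h.1)
      (by rw [d_s0s1]; exact fun h => npref_s1_s0 h.2)) hn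
  · refine Or.inr (Or.inr ⟨s1, g_s1, ?_⟩); rw [delta_eq]; group
  · exact absurd (lw_criterion (fun h => npref_s0_s1s0 h.1)
      (by rw [d_s0s1]; exact fun h => npref_s1_s0 h.2)) hn
  · exact absurd (lw_criterion (by rw [d_s1s0]; exact fun h => npref_s0_s1 h.2)
      (fun h => npref_s1_s0 h.1)) hn
  · refine Or.inr (Or.inl ?_); rw [delta_eq, braid_rel]
  · exact absurd (lw_criterion (by rw [d_s1s0]; exact fun h => npref_s0_s1 h.2)
      (fun h => npref_s1_s0s1 h.1)) hn
  · refine Or.inr (Or.inr ⟨s0, g_s0, ?_⟩); rw [delta_eq, braid_rel]; group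

def tau (y : B 3) : B 3 := (Δb 3)⁻¹ * y * Δb 3

lemma tau_comm (y : B 3) : y * Δb 3 = Δb 3 * tau y := by rw [tau]; group

lemma delta_eq' : Δb 3 = s1 * s0 * s1 := by rw [delta_eq, braid_rel]

lemma tau_s0 : tau s0 = s1 := by
  have h : s0 * Δb 3 = Δb 3 * s1 := by
    calc s0 * Δb 3 = s0 * (s0*s1*s0) := by rw [delta_eq]
    _ = s0 * (s1*s0*s1) := by rw [braid_rel]
    _ = (s0*s1*s0) * s1 := by group
    _ = Δb 3 * s1 := by rw [delta_eq]
  rw [tau, mul_assoc, h]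
  group

lemma tau_s1 : tau s1 = s0 := by
  have h : s1 * Δb 3 = Δb 3 * s0 := by
    calc s1 * Δb 3 = s1 * (s0*s1*s0) := by rw [delta_eq]
    _ = (s1*s0*s1) * s0 := by group
    _ = Δb 3 * s0 := by rw [delta_eq']
  rw [tau, mul_assoc, h]
  group

lemma tau_mul (x y : B 3) : tau (x*y) = tau x * tau y := by
  simp [tau]; group

lemma good_tau {s : B 3} (h : Good s) : Good (tau s) := by
  rcases h with rfl | rfl | rfl | rfl
  · rw [tau_s0]; exact g_s1
  · rw [tau_s1]; exact g_s0
  · rw [tau_mul, tau_s0, tau_s1]; exact g_s1s0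
  · rw [tau_mul, tau_s0, tau_s1]; exact g_s0s1

lemma prod_tau (M : List (B 3)) :
    M.prod * Δb 3 = Δb 3 * (M.map tau).prod := by
  induction M with
  | nil => simp
  | cons u M ih =>
    rw [List.prod_cons, List.map_cons, List.prod_cons, mul_assoc, ih,
      ← mul_assoc, tau_comm u, mul_assoc]

lemma step {L : List (B 3)} {p : ℤ} (goods : ∀ s ∈ L, Good s)
    (i : ℕ) (hi : i + 1 < L.length)
    (hbad : ¬ LeftWeighted 3 (L.getD i 1) (L.getD (i+1) 1)) :
    ∃ (p' : ℤ) (L' : List (B 3)), (∀ s ∈ L', Good s) ∧ L'.length < L.length ∧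
      (Δb 3) ^ p * L.prod = (Δb 3) ^ p' * L'.prod := by
  obtain ⟨A, C, a, b, hL, hga, hgb, hbad'⟩ :
      ∃ A C a b, L = A ++ a :: b :: C ∧ Good a ∧ Good b ∧
        ¬ LeftWeighted 3 a b := by
    refine ⟨L.take i, L.drop (i+2), L[i], L[i+1], ?_, ?_, ?_, ?_⟩
    · conv_lhs => rw [← List.take_append_drop i L]
      congr 1
      rw [List.drop_eq_getElem_cons (show i < L.length by omega),
        List.drop_eq_getElem_cons hi]
    · exact goods _ (List.getElem_mem _)
    · exact goods _ (List.getElem_mem _)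
    · rwa [List.getD_eq_getElem L 1 (show i < L.length by omega),
        List.getD_eq_getElem L 1 hi] at hbad
  have hlen : L.length = A.length + (C.length + 2) := by rw [hL]; simp
  have hp : L.prod = A.prod * (a * (b * C.prod)) := by
    rw [hL]; simp [List.prod_append, mul_assoc]
  have hAmem : ∀ s ∈ A, Good s := fun s hs => goods s (by rw [hL]; simp [hs])
  have hCmem : ∀ s ∈ C, Good s := fun s hs => goods s (by rw [hL]; simp [hs])
  rcases bad_rewrite hga hgb hbad' with ⟨c, hc, hab⟩ | hab | ⟨c, hc, hab⟩
  · refine ⟨p, A ++ c :: C, ?_, ?_, ?_⟩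
    · intro s hs
      rcases List.mem_append.mp hs with h | h
      · exact hAmem s h
      · rcases List.mem_cons.mp h with rfl | h
        · exact hc
        · exact hCmem s h
    · simp [hlen]
    · rw [hp, ← mul_assoc a b C.prod, hab]
      simp [List.prod_append, mul_assoc]
  · refine ⟨p + 1, A.map tau ++ C, ?_, ?_, ?_⟩
    · intro s hs
      rcases List.mem_append.mp hs with h | h
      · obtain ⟨t, ht, rfl⟩ := List.mem_map.mp h
        exact good_tau (hAmem t ht)
      · exact hCmem s h
    · simp [hlen]
    · calc (Δb 3)^p * L.prod = (Δb 3)^p * (A.prod * (Δb 3 * C.prod)) := by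
            rw [hp, ← mul_assoc a b C.prod, hab]
      _ = (Δb 3)^p * ((A.prod * Δb 3) * C.prod) := by rw [mul_assoc A.prod]
      _ = (Δb 3)^p * ((Δb 3 * (A.map tau).prod) * C.prod) := by rw [prod_tau]
      _ = ((Δb 3)^p * Δb 3) * ((A.map tau).prod * C.prod) := by
            simp [mul_assoc]
      _ = (Δb 3)^(p+1) * (A.map tau ++ C).prod := by
            rw [zpow_add_one]
            simp [List.prod_append]
  · refine ⟨p + 1, A.map tau ++ c :: C, ?_, ?_, ?_⟩
    · intro s hs
      rcases List.mem_append.mp hs with h | h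
      · obtain ⟨t, ht, rfl⟩ := List.mem_map.mp h
        exact good_tau (hAmem t ht)
      · rcases List.mem_cons.mp h with rfl | h
        · exact hc
        · exact hCmem s h
    · simp [hlen]
    · calc (Δb 3)^p * L.prod
          = (Δb 3)^p * (A.prod * (Δb 3 * (c * C.prod))) := by
            rw [hp, ← mul_assoc a b C.prod, hab, mul_assoc]
      _ = (Δb 3)^p * ((A.prod * Δb 3) * (c * C.prod)) := by rw [mul_assoc A.prod]
      _ = (Δb 3)^p * ((Δb 3 * (A.map tau).prod) * (c * C.prod)) := by rw [prod_tau]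
      _ = ((Δb 3)^p * Δb 3) * ((A.map tau).prod * (c * C.prod)) := by
            simp [mul_assoc]
      _ = (Δb 3)^(p+1) * (A.map tau ++ c :: C).prod := by
            rw [zpow_add_one]
            simp [List.prod_append, mul_assoc]

lemma process : ∀ (m : ℕ) (L : List (B 3)) (p : ℤ), L.length ≤ m →
    (∀ s ∈ L, Good s) →
    ∃ (p' : ℤ) (L' : List (B 3)), (∀ s ∈ L', Good s) ∧ L'.length ≤ L.length ∧
      (Δb 3) ^ p * L.prod = (Δb 3) ^ p' * L'.prod ∧
      (∀ i : ℕ, i + 1 < L'.length →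
        LeftWeighted 3 (L'.getD i 1) (L'.getD (i + 1) 1)) := by
  intro m
  induction m with
  | zero =>
    intro L p hm goods
    have hnil : L = [] := List.length_eq_zero_iff.mp (by omega)
    subst hnil
    exact ⟨p, [], by simp, by simp, rfl, by intro i hi; simp at hi⟩
  | succ m ih =>
    intro L p hm goods
    by_cases hlw : ∀ i : ℕ, i + 1 < L.length →
        LeftWeighted 3 (L.getD i 1) (L.getD (i + 1) 1)
    · exact ⟨p, L, goods, le_rfl, rfl, hlw⟩
    · push_neg at hlw
      obtain ⟨i, hi, hbad⟩ := hlw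
      obtain ⟨p'', L'', g'', hlt, heq⟩ := step goods i hi hbad
      obtain ⟨p', L', g', hle, heq2, hlw'⟩ := ih L'' p'' (by omega) g''
      exact ⟨p', L', g', by omega, heq.trans heq2, hlw'⟩

lemma exists_lnf (x : B 3) (p : ℤ) (L : List (B 3))
    (hx : x = (Δb 3) ^ p * L.prod) (hL : ∀ s ∈ L, Good s) :
    ∃ (p' : ℤ) (L' : List (B 3)), L'.length ≤ L.length ∧ IsLNF 3 x p' L' := by
  obtain ⟨p', L', g', hle, heq, hlw⟩ := process L.length L p le_rfl hL
  exact ⟨p', L', hle, hx.trans heq, fun s hs => good_props (g' s hs), hlw⟩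

/-- If `x ∈ B_3` has `inf(x) = p` and `ℓ(x) = r`, and
`x = Δ^p x_1 ⋯ x_r` with each `x_i` simple, `≠ 1`, `≠ Δ`, then this expression
is the left normal form of `x` (every consecutive pair is left-weighted). -/
theorem lnf_of_factorization_B3 (x : B 3) (p : ℤ) (r : ℕ) (L : List (B 3))
    (hinf : infB 3 x = p) (hlen : canLen 3 x = r) (hL : L.length = r)
    (heq : x = (Δb 3) ^ p * L.prod)
    (hfac : ∀ s ∈ L, IsSimple 3 s ∧ s ≠ 1 ∧ s ≠ Δb 3) :
    IsLNF 3 x p L := by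
  by_cases hlw : ∀ i : ℕ, i + 1 < L.length →
      LeftWeighted 3 (L.getD i 1) (L.getD (i + 1) 1)
  · exact ⟨heq, hfac, hlw⟩
  · exfalso
    have goods : ∀ s ∈ L, Good s := fun s hs =>
      good_of_props (hfac s hs).1 (hfac s hs).2.1 (hfac s hs).2.2
    push_neg at hlw
    obtain ⟨i, hi, hbad⟩ := hlw
    obtain ⟨p'', L'', g'', hlt, heqs⟩ := step goods i hi hbad
    obtain ⟨p', L', hle, hlnf⟩ := exists_lnf x p'' L'' (heq.trans heqs) g''
    have hmem : L'.length ∈ {r : ℕ | ∃ p L, List.length L = r ∧ IsLNF 3 x p L} :=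
      ⟨p', L', rfl, hlnf⟩
    have h1 : canLen 3 x ≤ L'.length := Nat.sInf_le hmem
    rw [hlen] at h1
    omega

end Braid
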